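/- For h ∈ (0,1] and ζ ∈ ℝⁿ define ρ_∞ = (1+|ζ|²)^{-1/2}, ρ_{ℏ,∞} = (1+h²|ζ|²)^{-1/2}, ρ_{ℏ,ff} = (h²+(1+|ζ|²)^{-1})^{1/2}, ρ_{ℏ,0} = h/ρ_{ℏ,ff}. Then for any m, k ∈ ℝ there exist c, C > 0 independent of h, ζ such that c·ρ_∞^{-m} h^{-k} ≤ ρ_{ℏ,∞}^{-m} ρ_{ℏ,ff}^{-(m+k)} ρ_{ℏ,0}^{-k} ≤ C·ρ_∞^{-m} h^{-k}. -/

import Mathlib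

/-! The factor `ρ_{ℏ,0}^{-k} = h^{-k} ρ_{ℏ,ff}^{k}` cancels the `k`-part of `ρ_{ℏ,ff}^{-(m+k)}`,
so the weight is `q^m ρ_∞^{-m} h^{-k}` with `q = ρ_{ℏ,∞}^{-1} / (ρ_{ℏ,ff} ρ_∞^{-1})`.
Since `ρ_{ℏ,ff}² (1 + |ζ|²) = 1 + h² + h²|ζ|²` lies between `1 + h²|ζ|²` and `2 (1 + h²|ζ|²)`
for `h ≤ 1`, the ratio `q` lies in `[1/√2, 1]`, hence `q^m` in `[√2^{-|m|}, √2^{|m|}]`. -/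

open Real Set

theorem rpow_mem_Icc_of_inv_le_of_le {c q : ℝ} (m : ℝ) (hc : 1 ≤ c) (hcq : c⁻¹ ≤ q)
    (hqc : q ≤ c) : c ^ (-|m|) ≤ q ^ m ∧ q ^ m ≤ c ^ |m| := by
  have hc0 : 0 < c := one_pos.trans_le hc
  have hq0 : 0 < q := (inv_pos.mpr hc0).trans_le hcq
  have hlog : |log q| ≤ log c := by
    rw [abs_le]
    refine ⟨?_, log_le_log hq0 hqc⟩
    simpa only [log_inv, neg_le] using log_le_log (inv_pos.mpr hc0) hcq
  have hmlog : |log q * m| ≤ log c * |m| := by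
    rw [abs_mul]
    exact mul_le_mul_of_nonneg_right hlog (abs_nonneg m)
  rw [rpow_def_of_pos hc0, rpow_def_of_pos hq0, rpow_def_of_pos hc0, exp_le_exp, exp_le_exp,
    mul_neg]
  exact abs_le.mp hmlog

theorem rpow_weight_factorization {a f t h : ℝ} (m k : ℝ) (ha : 0 < a) (hf : 0 < f)
    (ht : 0 < t) (hh : 0 < h) :
    a⁻¹ ^ (-m) * f ^ (-(m + k)) * (h / f) ^ (-k) = (a / (f * t)) ^ m * (t⁻¹ ^ (-m) * h ^ (-k)) := by
  rw [inv_rpow ha.le, inv_rpow ht.le, rpow_neg ha.le, rpow_neg ht.le, inv_inv, inv_inv,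
    div_rpow hh.le hf.le, div_rpow ha.le (mul_pos hf ht).le, mul_rpow hf.le ht.le, neg_add,
    rpow_add hf, rpow_neg hf.le, rpow_neg hf.le, rpow_neg hh.le]
  have : f ^ k ≠ 0 := (rpow_pos_of_pos hf k).ne'
  have : f ^ m ≠ 0 := (rpow_pos_of_pos hf m).ne'
  have : t ^ m ≠ 0 := (rpow_pos_of_pos ht m).ne'
  have : h ^ k ≠ 0 := (rpow_pos_of_pos hh k).ne'
  field_simp

theorem sqrt_sq_add_inv_mul_sqrt {h s : ℝ} (hs : 0 ≤ s) :
    √(h ^ 2 + (1 + s)⁻¹) * √(1 + s) = √(1 + h ^ 2 + h ^ 2 * s) := by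
  have hs1 : 1 + s ≠ 0 := by positivity
  rw [← sqrt_mul (by positivity)]
  congr 1
  field_simp
  ring

theorem sqrt_one_add_sq_mul_le {h s : ℝ} (hs : 0 ≤ s) :
    √(1 + h ^ 2 * s) ≤ √(h ^ 2 + (1 + s)⁻¹) * √(1 + s) := by
  rw [sqrt_sq_add_inv_mul_sqrt hs]
  exact sqrt_le_sqrt (by nlinarith [sq_nonneg h])

theorem sqrt_sq_add_inv_mul_sqrt_le {h s : ℝ} (hs : 0 ≤ s) (hh : h ^ 2 ≤ 1) :
    √(h ^ 2 + (1 + s)⁻¹) * √(1 + s) ≤ √2 * √(1 + h ^ 2 * s) := by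
  rw [sqrt_sq_add_inv_mul_sqrt hs, ← sqrt_mul zero_le_two]
  exact sqrt_le_sqrt (by nlinarith [sq_nonneg h])

theorem semiclassical_ratio_mem_Icc {h s : ℝ} (hs : 0 ≤ s) (hh : h ^ 2 ≤ 1) :
    (√2)⁻¹ ≤ √(1 + h ^ 2 * s) / (√(h ^ 2 + (1 + s)⁻¹) * √(1 + s)) ∧
      √(1 + h ^ 2 * s) / (√(h ^ 2 + (1 + s)⁻¹) * √(1 + s)) ≤ 1 := by
  have hA : 0 < √(1 + h ^ 2 * s) := sqrt_pos.mpr (by positivity)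
  have hFT : 0 < √(h ^ 2 + (1 + s)⁻¹) * √(1 + s) := by positivity
  constructor
  · rw [le_div_iff₀ hFT, inv_mul_le_iff₀ (by positivity)]
    exact sqrt_sq_add_inv_mul_sqrt_le hs hh
  · exact (div_le_one hFT).mpr (sqrt_one_add_sq_mul_le hs)

/-- with the boundary defining functions of the resolved
semiclassical-classical phase space, for any `m, k ∈ ℝ`,
`ρ_{ℏ,∞}^{-m} ρ_{ℏ,ff}^{-(m+k)} ρ_{ℏ,0}^{-k} ≍ ρ_∞^{-m} h^{-k}` uniformly:
the quantitative content of `S^{m,k} = S^{m,m+k,k}`. -/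
theorem stmt14 (n : ℕ) (m k : ℝ) :
    ∃ c C : ℝ, 0 < c ∧ 0 < C ∧ ∀ h ∈ Ioc (0:ℝ) 1, ∀ ζ : EuclideanSpace ℝ (Fin n),
      c * ((Real.sqrt (1 + ‖ζ‖^2))⁻¹) ^ (-m) * h ^ (-k) ≤
        ((Real.sqrt (1 + h^2 * ‖ζ‖^2))⁻¹) ^ (-m) *
          (Real.sqrt (h^2 + (1 + ‖ζ‖^2)⁻¹)) ^ (-(m + k)) *
          (h / Real.sqrt (h^2 + (1 + ‖ζ‖^2)⁻¹)) ^ (-k) ∧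
      ((Real.sqrt (1 + h^2 * ‖ζ‖^2))⁻¹) ^ (-m) *
          (Real.sqrt (h^2 + (1 + ‖ζ‖^2)⁻¹)) ^ (-(m + k)) *
          (h / Real.sqrt (h^2 + (1 + ‖ζ‖^2)⁻¹)) ^ (-k) ≤
        C * ((Real.sqrt (1 + ‖ζ‖^2))⁻¹) ^ (-m) * h ^ (-k) := by
  refine ⟨√2 ^ (-|m|), √2 ^ |m|, by positivity, by positivity, ?_⟩
  rintro h ⟨hh0, hh1⟩ ζ
  have hs : 0 ≤ ‖ζ‖ ^ 2 := by positivity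
  have hh : h ^ 2 ≤ 1 := pow_le_one₀ hh0.le hh1
  have hsqrt2 : 1 ≤ √2 := one_le_sqrt.mpr one_le_two
  obtain ⟨hq_lo, hq_hi⟩ := semiclassical_ratio_mem_Icc hs hh
  obtain ⟨hc, hC⟩ := rpow_mem_Icc_of_inv_le_of_le m hsqrt2 hq_lo (hq_hi.trans hsqrt2)
  have hrest : 0 ≤ (√(1 + ‖ζ‖ ^ 2))⁻¹ ^ (-m) * h ^ (-k) := by positivity
  rw [rpow_weight_factorization (t := √(1 + ‖ζ‖ ^ 2)) m k (sqrt_pos.mpr (by positivity))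
    (sqrt_pos.mpr (by positivity)) (sqrt_pos.mpr (by positivity)) hh0, mul_assoc, mul_assoc]
  exact ⟨mul_le_mul_of_nonneg_right hc hrest, mul_le_mul_of_nonneg_right hC hrest⟩
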